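/- arXiv:2011.09680 — 2 statements merged into one kernel-verified Lean document; each statement's English description precedes it below -/
import Mathlib

section
/- Suppose β > 1, h < 0, and on the interval J = [−h − √(h²−2c), −h + √(h²−2c)] (with c < h²/2) one has m > tanh((m+h)/(f((E(m)−c)_+)+ε)) for all m ∈ J, while outside J the modified free energy derivative agrees with g'(m) = arctanh(m) − β(m+h). If additionally g' > 0 on (−1,1) \ J to the right of J and g has a unique zero of g' at m₋* < inf J, then m₋* is the unique stationary point of the modified free energy g_f on (−1,1), and it is the global minimum. -/
/-! On `J` the hypothesis `tanh (…) < m` is equivalent to `g_f' m > 0`, since `tanh` is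
inverted by `artanh m = log ((1 + m) / (1 - m)) / 2`; outside `J` the derivative `g_f'` is
the mean-field `g'`, whose sign is given. Hence `g_f'` is negative left of `m₋*`, vanishes
there and is positive right of it, so `g_f` decreases and then increases on `(-1, 1)`. -/

open Set Real

theorem Real.lt_artanh_of_tanh_lt {x m : ℝ} (hm : m < 1) (h : tanh x < m) : x < artanh m := by
  simpa only [artanh_tanh] using artanh_lt_artanh (neg_one_lt_tanh x) hm h

theorem eq_zero_iff_eq_of_neg_of_pos {φ : ℝ → ℝ} {s : Set ℝ} {x₀ : ℝ}
    (hneg : ∀ x ∈ s, x < x₀ → φ x < 0) (hpos : ∀ x ∈ s, x₀ < x → 0 < φ x) (hzero : φ x₀ = 0)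
    {x : ℝ} (hx : x ∈ s) : φ x = 0 ↔ x = x₀ := by
  refine ⟨fun hφ => ?_, fun h => h ▸ hzero⟩
  rcases lt_trichotomy x x₀ with hlt | heq | hgt
  · exact absurd hφ (hneg x hx hlt).ne
  · exact heq
  · exact absurd hφ (hpos x hx hgt).ne'

theorem isMinOn_Ioo_of_hasDerivAt_neg_pos {g g' : ℝ → ℝ} {a b x₀ : ℝ}
    (hg : ∀ x ∈ Ioo a b, HasDerivAt g (g' x) x)
    (hneg : ∀ x ∈ Ioo a b, x < x₀ → g' x < 0) (hpos : ∀ x ∈ Ioo a b, x₀ < x → 0 < g' x)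
    (hx₀ : x₀ ∈ Ioo a b) : IsMinOn g (Ioo a b) x₀ := by
  have hcont : ContinuousOn g (Ioo a b) := fun x hx => (hg x hx).continuousAt.continuousWithinAt
  have hanti : StrictAntiOn g (Ioc a x₀) := by
    refine strictAntiOn_of_hasDerivWithinAt_neg (f' := g') (convex_Ioc a x₀)
      (hcont.mono (Ioc_subset_Ioo_right hx₀.2)) (fun x hx => ?_) (fun x hx => ?_) <;>
      rw [interior_Ioc] at hx
    · exact (hg x ⟨hx.1, hx.2.trans hx₀.2⟩).hasDerivWithinAt
    · exact hneg x ⟨hx.1, hx.2.trans hx₀.2⟩ hx.2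
  have hmono : StrictMonoOn g (Ico x₀ b) := by
    refine strictMonoOn_of_hasDerivWithinAt_pos (f' := g') (convex_Ico x₀ b)
      (hcont.mono (Ico_subset_Ioo_left hx₀.1)) (fun x hx => ?_) (fun x hx => ?_) <;>
      rw [interior_Ico] at hx
    · exact (hg x ⟨hx₀.1.trans hx.1, hx.2⟩).hasDerivWithinAt
    · exact hpos x ⟨hx₀.1.trans hx.1, hx.2⟩ hx.1
  intro x hx
  rcases le_total x x₀ with hle | hge
  · exact hanti.antitoneOn ⟨hx.1, hle⟩ ⟨hx₀.1, le_rfl⟩ hle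
  · exact hmono.monotoneOn ⟨le_rfl, hx₀.2⟩ ⟨hge, hx.2⟩ hge

theorem stmt15_general (h ε β c : ℝ) (f : ℝ → ℝ) (E gf gf' : ℝ → ℝ)
    (hgf' : ∀ m, gf' m =
      Real.log ((1 + m) / (1 - m)) / 2 - (m + h) / (f (max (E m - c) 0) + ε))
    (hderiv : ∀ m ∈ Set.Ioo (-1 : ℝ) 1, HasDerivAt gf (gf' m) m)
    (J : Set ℝ)
    (hJ : J = Set.Icc (-h - Real.sqrt (h ^ 2 - 2 * c)) (-h + Real.sqrt (h ^ 2 - 2 * c)))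
    (hposJ : ∀ m ∈ J ∩ Set.Ioo (-1 : ℝ) 1,
      Real.tanh ((m + h) / (f (max (E m - c) 0) + ε)) < m)
    (houtside : ∀ m ∈ Set.Ioo (-1 : ℝ) 1 \ J,
      gf' m = Real.log ((1 + m) / (1 - m)) / 2 - β * (m + h))
    (hright : ∀ m ∈ Set.Ioo (-1 : ℝ) 1,
      -h + Real.sqrt (h ^ 2 - 2 * c) < m →
        0 < Real.log ((1 + m) / (1 - m)) / 2 - β * (m + h))
    (mstar : ℝ) (hmstarmem : mstar ∈ Set.Ioo (-1 : ℝ) 1)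
    (hmstarJ : mstar < -h - Real.sqrt (h ^ 2 - 2 * c))
    (hmstarzero : Real.log ((1 + mstar) / (1 - mstar)) / 2 - β * (mstar + h) = 0)
    (hleft : ∀ m ∈ Set.Ioo (-1 : ℝ) 1, m < mstar →
      Real.log ((1 + m) / (1 - m)) / 2 - β * (m + h) < 0)
    (hmid : ∀ m ∈ Set.Ioo (-1 : ℝ) 1, mstar < m → m < -h - Real.sqrt (h ^ 2 - 2 * c) →
      0 < Real.log ((1 + m) / (1 - m)) / 2 - β * (m + h)) :
    (∀ m ∈ Set.Ioo (-1 : ℝ) 1, gf' m = 0 ↔ m = mstar) ∧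
      ∀ m ∈ Set.Ioo (-1 : ℝ) 1, gf mstar ≤ gf m := by
  subst hJ
  have hneg : ∀ m ∈ Ioo (-1 : ℝ) 1, m < mstar → gf' m < 0 := fun m hm hlt => by
    rw [houtside m ⟨hm, fun hJ => (hlt.trans hmstarJ).not_ge hJ.1⟩]
    exact hleft m hm hlt
  have hpos : ∀ m ∈ Ioo (-1 : ℝ) 1, mstar < m → 0 < gf' m := fun m hm hgt => by
    by_cases hmJ : m ∈ Icc (-h - √(h ^ 2 - 2 * c)) (-h + √(h ^ 2 - 2 * c))
    · have := lt_artanh_of_tanh_lt hm.2 (hposJ m ⟨hmJ, hm⟩)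
      rw [artanh_eq_half_log (Ioo_subset_Icc_self hm)] at this
      linarith [hgf' m]
    · rw [houtside m ⟨hm, hmJ⟩]
      rcases not_and_or.mp hmJ with hlt | hgt
      · exact hmid m hm hgt (not_le.mp hlt)
      · exact hright m hm (not_le.mp hgt)
  have hzero : gf' mstar = 0 := by
    rw [houtside mstar ⟨hmstarmem, fun hJ => hmstarJ.not_ge hJ.1⟩, hmstarzero]
  exact ⟨fun m hm => eq_zero_iff_eq_of_neg_of_pos hneg hpos hzero hm,
    isMinOn_Ioo_of_hasDerivAt_neg_pos hderiv hneg hpos hmstarmem⟩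

/-- Theorem 3.1(1), convexification: suppose `β > 1`, `h < 0`,
`ε = 1/β`, `c < h²/2`, and on `J = [−h − √(h²−2c), −h + √(h²−2c)]` one has
`m > tanh((m+h)/(f((E(m)−c)_+)+ε))` (i.e. the modified derivative
`g_f'(m) = arctanh(m) − (m+h)/(f((E(m)−c)_+)+ε)` is positive on `J`), while outside `J`
`g_f'` agrees with `g'(m) = arctanh(m) − β(m+h)`, which is positive to the right of `J`,
negative left of its unique zero `mstar* < inf J` and positive between `mstar*` and `J`.
Then `mstar*` is the unique stationary point of `g_f` on `(−1,1)` and its global minimum. -/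
theorem stmt15 (h ε β c : ℝ) (hβ1 : 1 < β) (hh : h < 0) (hε : ε = 1 / β)
    (hc : c < h ^ 2 / 2)
    (f : ℝ → ℝ) (hf_cont : Continuous f) (hf_mono : MonotoneOn f (Set.Ici (0 : ℝ)))
    (hf_nonneg : ∀ u, 0 ≤ u → 0 ≤ f u) (hf0 : f 0 = 0)
    (E I gf gf' : ℝ → ℝ)
    (hE : ∀ m, E m = -m ^ 2 / 2 - h * m)
    (hI : ∀ m, I m =
      (1 + m) * Real.log (1 + m) / 2 + (1 - m) * Real.log (1 - m) / 2)
    (hgf' : ∀ m, gf' m =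
      Real.log ((1 + m) / (1 - m)) / 2 - (m + h) / (f (max (E m - c) 0) + ε))
    (hderiv : ∀ m ∈ Set.Ioo (-1 : ℝ) 1, HasDerivAt gf (gf' m) m)
    (J : Set ℝ)
    (hJ : J = Set.Icc (-h - Real.sqrt (h ^ 2 - 2 * c)) (-h + Real.sqrt (h ^ 2 - 2 * c)))
    (hposJ : ∀ m ∈ J ∩ Set.Ioo (-1 : ℝ) 1,
      Real.tanh ((m + h) / (f (max (E m - c) 0) + ε)) < m)
    (houtside : ∀ m ∈ Set.Ioo (-1 : ℝ) 1 \ J,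
      gf' m = Real.log ((1 + m) / (1 - m)) / 2 - β * (m + h))
    (hright : ∀ m ∈ Set.Ioo (-1 : ℝ) 1,
      -h + Real.sqrt (h ^ 2 - 2 * c) < m →
        0 < Real.log ((1 + m) / (1 - m)) / 2 - β * (m + h))
    (mstar : ℝ) (hmstarmem : mstar ∈ Set.Ioo (-1 : ℝ) 1)
    (hmstarJ : mstar < -h - Real.sqrt (h ^ 2 - 2 * c))
    (hmstarzero : Real.log ((1 + mstar) / (1 - mstar)) / 2 - β * (mstar + h) = 0)
    (hleft : ∀ m ∈ Set.Ioo (-1 : ℝ) 1, m < mstar →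
      Real.log ((1 + m) / (1 - m)) / 2 - β * (m + h) < 0)
    (hmid : ∀ m ∈ Set.Ioo (-1 : ℝ) 1, mstar < m → m < -h - Real.sqrt (h ^ 2 - 2 * c) →
      0 < Real.log ((1 + m) / (1 - m)) / 2 - β * (m + h)) :
    (∀ m ∈ Set.Ioo (-1 : ℝ) 1, gf' m = 0 ↔ m = mstar) ∧
      ∀ m ∈ Set.Ioo (-1 : ℝ) 1, gf mstar ≤ gf m :=
  stmt15_general h ε β c f E gf gf' hgf' hderiv J hJ hposJ houtside hright mstar hmstarmem hmstarJ
    hmstarzero hleft hmid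
end

section
/- Let μ be a probability measure on a finite set X with S ⊆ X the set of global minimizers of H, d̲ := min{H(x) : H(x) > H_min}, and let π_t(x) ∝ exp(−H^f_{ε_t,c}(x)) μ(x). If c ≥ d̲ then π_t(X \ S) ≤ (1/μ(S)) · exp(−β_t (d̲ − H_min)), where β_t = 1/ε_t. -/
/-!
On `(-∞, c]` the integrand defining `H^f_{ε,c}` equals `1/ε`, since `f 0 = 0`. As `c ≥ d̲`, every
state off `S` therefore has modified energy at least `(d̲ - H_min)/ε`, while states in `S` have
modified energy `0`. So the numerator of `π_t(X \ S)` is at most `e^{-β_t (d̲ - H_min)}` and its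
denominator is at least `μ(S)`.
-/

open Real Finset

section ModifiedEnergy

variable {f : ℝ → ℝ} {ε : ℝ}

theorem one_div_comp_max_sub_add_pos (hf_mono : MonotoneOn f (Set.Ici 0)) (hf0 : f 0 = 0)
    (hε : 0 < ε) (c u : ℝ) : 0 < 1 / (f (max (u - c) 0) + ε) := by
  have : f 0 ≤ f (max (u - c) 0) :=
    hf_mono Set.self_mem_Ici (Set.mem_Ici.2 (le_max_right _ _)) (le_max_right _ _)
  exact one_div_pos.2 (by linarith)

theorem antitone_one_div_comp_max_sub_add (hf_mono : MonotoneOn f (Set.Ici 0)) (hf0 : f 0 = 0)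
    (hε : 0 < ε) (c : ℝ) : Antitone fun u => 1 / (f (max (u - c) 0) + ε) := by
  intro u v huv
  refine one_div_le_one_div_of_le (one_div_pos.1 (one_div_comp_max_sub_add_pos hf_mono hf0 hε c u))
    (add_le_add_left ?_ ε)
  exact hf_mono (Set.mem_Ici.2 (le_max_right _ _)) (Set.mem_Ici.2 (le_max_right _ _))
    (max_le_max (sub_le_sub_right huv c) le_rfl)

theorem div_le_integral_one_div_comp_max_sub_add (hf_mono : MonotoneOn f (Set.Ici 0))
    (hf0 : f 0 = 0) (hε : 0 < ε) {c a d b : ℝ} (had : a ≤ d) (hdb : d ≤ b) (hdc : d ≤ c) :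
    (d - a) / ε ≤ ∫ u in a..b, 1 / (f (max (u - c) 0) + ε) := by
  have hflat : (∫ u in a..d, 1 / (f (max (u - c) 0) + ε)) = (d - a) / ε := by
    rw [intervalIntegral.integral_congr (g := fun _ => 1 / ε), intervalIntegral.integral_const,
      smul_eq_mul, mul_one_div]
    intro u hu
    rw [Set.uIcc_of_le had] at hu
    simp only [max_eq_right (by linarith [hu.2] : u - c ≤ 0), hf0, zero_add]
  rw [← hflat]
  exact intervalIntegral.integral_mono_interval le_rfl had hdb
    (.of_forall fun u => (one_div_comp_max_sub_add_pos hf_mono hf0 hε c u).le)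
    (antitone_one_div_comp_max_sub_add hf_mono hf0 hε c).intervalIntegrable

end ModifiedEnergy

theorem sum_compl_exp_neg_mul_div_sum_le {X : Type*} [Fintype X] [DecidableEq X] (μ E : X → ℝ)
    (S : Finset X) (B : ℝ) (hμ : ∀ x, 0 ≤ μ x) (hμsum : ∑ x, μ x = 1)
    (hμS : 0 < ∑ x ∈ S, μ x) (hES : ∀ x ∈ S, E x ≤ 0) (hE : ∀ x ∉ S, B ≤ E x) :
    (∑ x ∈ Sᶜ, exp (-E x) * μ x) / (∑ x, exp (-E x) * μ x) ≤
      (1 / ∑ x ∈ S, μ x) * exp (-B) := by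
  have hterm : ∀ x, 0 ≤ exp (-E x) * μ x := fun x => mul_nonneg (exp_pos _).le (hμ x)
  have hnum : ∑ x ∈ Sᶜ, exp (-E x) * μ x ≤ exp (-B) :=
    calc ∑ x ∈ Sᶜ, exp (-E x) * μ x ≤ ∑ x ∈ Sᶜ, exp (-B) * μ x := by
          gcongr with x hx
          · exact hμ x
          · linarith [hE x (mem_compl.1 hx)]
      _ = exp (-B) * ∑ x ∈ Sᶜ, μ x := (mul_sum _ _ _).symm
      _ ≤ exp (-B) * ∑ x, μ x := by
          gcongr
          · exact fun x _ _ => hμ x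
          · exact subset_univ _
      _ = exp (-B) := by rw [hμsum, mul_one]
  have hden : ∑ x ∈ S, μ x ≤ ∑ x, exp (-E x) * μ x :=
    calc ∑ x ∈ S, μ x ≤ ∑ x ∈ S, exp (-E x) * μ x := by
          gcongr with x hx
          exact le_mul_of_one_le_left (hμ x) (one_le_exp (by linarith [hES x hx]))
      _ ≤ ∑ x, exp (-E x) * μ x :=
          sum_le_sum_of_subset_of_nonneg (subset_univ S) fun x _ _ => hterm x
  calc (∑ x ∈ Sᶜ, exp (-E x) * μ x) / (∑ x, exp (-E x) * μ x)
      ≤ exp (-B) / ∑ x ∈ S, μ x :=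
        div_le_div₀ (exp_pos _).le hnum hμS hden
    _ = (1 / ∑ x ∈ S, μ x) * exp (-B) := by ring

theorem stmt19_general {X : Type*} [Fintype X] [DecidableEq X] (H : X → ℝ) (μ : X → ℝ)
    (hμpos : ∀ x, 0 < μ x) (hμsum : ∑ x, μ x = 1)
    (Hmin : ℝ) (hHmin : IsLeast (Set.range H) Hmin)
    (S : Finset X) (hS : ∀ x, x ∈ S ↔ H x = Hmin)
    (dlow : ℝ) (hdlow : IsLeast {v | ∃ x, H x = v ∧ Hmin < v} dlow)
    (f : ℝ → ℝ) (hf_mono : MonotoneOn f (Set.Ici (0 : ℝ)))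
    (hf0 : f 0 = 0)
    (εt βt c : ℝ) (hεt : 0 < εt) (hβt : βt = 1 / εt) (hc : dlow ≤ c)
    (Hf : X → ℝ)
    (hHf : ∀ x, Hf x = ∫ u in Hmin..(H x), 1 / (f (max (u - c) 0) + εt)) :
    (∑ x ∈ Sᶜ, Real.exp (-Hf x) * μ x) / (∑ x, Real.exp (-Hf x) * μ x) ≤
      (1 / ∑ x ∈ S, μ x) * Real.exp (-βt * (dlow - Hmin)) := by
  obtain ⟨x₀, hx₀⟩ := hHmin.1
  have hμS : 0 < ∑ x ∈ S, μ x :=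
    sum_pos' (fun x _ => (hμpos x).le) ⟨x₀, (hS x₀).2 hx₀, hμpos x₀⟩
  have hHfS : ∀ x ∈ S, Hf x ≤ 0 := fun x hx => by
    rw [hHf x, (hS x).1 hx, intervalIntegral.integral_same]
  have hHfB : ∀ x ∉ S, βt * (dlow - Hmin) ≤ Hf x := fun x hx => by
    have hlt : Hmin < H x := (hHmin.2 ⟨x, rfl⟩).lt_of_ne fun h => hx ((hS x).2 h.symm)
    obtain ⟨y, rfl, hy⟩ := hdlow.1
    rw [hHf x, hβt, one_div_mul_eq_div]
    exact div_le_integral_one_div_comp_max_sub_add hf_mono hf0 hεt hy.le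
      (hdlow.2 ⟨x, rfl, hlt⟩) hc
  simpa only [neg_mul] using
    sum_compl_exp_neg_mul_div_sum_le μ Hf S _ (fun x => (hμpos x).le) hμsum hμS hHfS hHfB

/-- for the modified Gibbs measure `π_t(x) ∝ exp(−H^f_{ε_t,c}(x)) μ(x)`
with `S = argmin H`, second-lowest energy value `d̲`, and `c ≥ d̲`:
`π_t(X \ S) ≤ (1/μ(S)) · exp(−β_t (d̲ − H_min))`, where `β_t = 1/ε_t`. -/
theorem stmt19 {X : Type*} [Fintype X] [Nonempty X] [DecidableEq X] (H : X → ℝ) (μ : X → ℝ)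
    (hμpos : ∀ x, 0 < μ x) (hμsum : ∑ x, μ x = 1)
    (Hmin : ℝ) (hHmin : IsLeast (Set.range H) Hmin)
    (S : Finset X) (hS : ∀ x, x ∈ S ↔ H x = Hmin)
    (hnotconst : ∃ x, Hmin < H x)
    (dlow : ℝ) (hdlow : IsLeast {v | ∃ x, H x = v ∧ Hmin < v} dlow)
    (f : ℝ → ℝ) (hf_mono : MonotoneOn f (Set.Ici (0 : ℝ)))
    (hf_nonneg : ∀ u, 0 ≤ u → 0 ≤ f u) (hf0 : f 0 = 0)
    (εt βt c : ℝ) (hεt : 0 < εt) (hβt : βt = 1 / εt) (hc : dlow ≤ c)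
    (Hf : X → ℝ)
    (hHf : ∀ x, Hf x = ∫ u in Hmin..(H x), 1 / (f (max (u - c) 0) + εt)) :
    (∑ x ∈ Sᶜ, Real.exp (-Hf x) * μ x) / (∑ x, Real.exp (-Hf x) * μ x) ≤
      (1 / ∑ x ∈ S, μ x) * Real.exp (-βt * (dlow - Hmin)) :=
  stmt19_general H μ hμpos hμsum Hmin hHmin S hS dlow hdlow f hf_mono hf0 εt βt c hεt hβt hc Hf hHf
end
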